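/- arXiv:2605.13020 — 2 statements merged into one kernel-verified Lean document; each statement's English description precedes it below -/
import Mathlib

section
/- Suppose some λ_k with k ≥ 1 is nonzero, and let k ≥ 1 be the smallest integer with λ_k ≠ 0. Then in R^{t,x^{p^s}−λ}_Θ one has the equality of (two-sided) ideals ⟨(λ_{0,0}x − 1)^{p^s}⟩ = ⟨u^k⟩. -/
open Polynomial

namespace SkewPaper

variable (p m t : ℕ) [Fact p.Prime]

/-- The finite field `F_{p^m}`. -/
abbrev Fq : Type := GaloisField p m

/-- The finite chain ring `R^t = F_{p^m}[u]/⟨u^t⟩`. -/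
abbrev Rt : Type :=
  Polynomial (Fq p m) ⧸ Ideal.span {(Polynomial.X : Polynomial (Fq p m)) ^ t}

/-- The element `u` of `R^t`. -/
noncomputable def uE : Rt p m t := Ideal.Quotient.mk _ Polynomial.X

/-- The canonical embedding `F_{p^m} → R^t`. -/
noncomputable def eps : Fq p m →+* Rt p m t :=
  (Ideal.Quotient.mk _).comp Polynomial.C

/-- The automorphism `Θ` of `R^t` extending `θ` with `Θ(u) = u`,
i.e. `Θ(a₀ + a₁u + ⋯ + a_{t-1}u^{t-1}) = θ(a₀) + θ(a₁)u + ⋯ + θ(a_{t-1})u^{t-1}`. -/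
noncomputable def Th (theta : Fq p m ≃+* Fq p m) : Rt p m t ≃+* Rt p m t :=
  Ideal.quotientEquiv _ _ (Polynomial.mapEquiv theta) (by
    rw [Ideal.map_span, Set.image_singleton]
    simp [Polynomial.mapEquiv_apply])

/-- Reduction of `R^t` modulo `u`. -/
noncomputable def rdc (ht : 0 < t) : Rt p m t →+* Fq p m :=
  Ideal.Quotient.lift _ (Polynomial.evalRingHom 0) (by
    intro a ha
    rw [Ideal.mem_span_singleton] at ha
    obtain ⟨b, rfl⟩ := ha
    simp [zero_pow ht.ne'])

/-- `a` right-divides `b`, i.e. `b = h * a` for some `h`. -/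
def RDvd {A : Type*} [Mul A] (a b : A) : Prop := ∃ h, b = h * a

/-- The element `Σᵢ ι(cᵢ) X^i` determined by a coefficient family `c`. -/
noncomputable def spoly {R A : Type*} [Semiring R] [Semiring A] (iot : R →+* A) (X : A)
    (c : ℕ →₀ R) : A :=
  c.sum fun i a => iot a * X ^ i

/-- Lift `Σᵢ ι(ε(cᵢ)) X^i` of a skew polynomial over `F_{p^m}` to the skew polynomial ring
over `R^t` (coefficient-wise, via the embedding `F_{p^m} → R^t`). -/
noncomputable def liftP {A : Type*} [Semiring A] (iot : Rt p m t →+* A) (X : A)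
    (c : ℕ →₀ Fq p m) : A :=
  c.sum fun i a => iot (eps p m t a) * X ^ i

/-- `λ = λ₀ + uλ₁ + ⋯ + u^{t-1}λ_{t-1}` as an element of `R^t`. -/
noncomputable def lamOf (lc : ℕ → Fq p m) : Rt p m t :=
  ∑ i ∈ Finset.range t, eps p m t (lc i) * uE p m t ^ i

/-- The order `|Θ|` of `Θ` in the automorphism group of `R^t`. -/
noncomputable def thOrder (theta : Fq p m ≃+* Fq p m) : ℕ :=
  orderOf (G := RingAut (Rt p m t)) (Th p m t theta)

/-- The order `|θ|` of `θ` in the automorphism group of `F_{p^m}`. -/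
noncomputable def thetaOrder (theta : Fq p m ≃+* Fq p m) : ℕ :=
  orderOf (G := RingAut (Fq p m)) theta

/-- The central polynomial `f(x) = Σᵢ fᵢ x^{i·|Θ|}` in the skew polynomial ring. -/
noncomputable def fOf {A : Type*} [Ring A] (theta : Fq p m ≃+* Fq p m)
    (iot : Rt p m t →+* A) (X : A) (fc : ℕ →₀ Rt p m t) : A :=
  fc.sum fun i a => iot a * X ^ (i * thOrder p m t theta)

/-- The image of `u` in the quotient `R^{t,f}_Θ`. -/
noncomputable def uQ {P Q : Type*} [Semiring P] [Semiring Q] (iot : Rt p m t →+* P)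
    (piQ : P →+* Q) : Q :=
  piQ (iot (uE p m t))

/-- The image in `R^{t,f}_Θ` of the lift of a skew polynomial over `F_{p^m}`. -/
noncomputable def lQ {P Q : Type*} [Semiring P] [Semiring Q] (iot : Rt p m t →+* P) (X : P)
    (piQ : P →+* Q) (c : ℕ →₀ Fq p m) : Q :=
  piQ (liftP p m t iot X c)

/-- The class in `F_{p^m}[x,θ]/⟨f̄⟩` of the skew polynomial with coefficients `c`. -/
noncomputable def lQf {Pf Qf : Type*} [Semiring Pf] [Semiring Qf] (iotf : Fq p m →+* Pf)
    (Xf : Pf) (pif : Pf →+* Qf) (c : ℕ →₀ Fq p m) : Qf :=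
  pif (spoly iotf Xf c)

/-- `b(x)` right-divides `c(x)` in the quotient `F_{p^m}[x,θ]/⟨f̄⟩`. -/
def RDvdC {Pf Qf : Type*} [Semiring Pf] [Semiring Qf] (iotf : Fq p m →+* Pf) (Xf : Pf)
    (pif : Pf →+* Qf) (b c : ℕ →₀ Fq p m) : Prop :=
  ∃ h : Qf, lQf p m iotf Xf pif c = h * lQf p m iotf Xf pif b

/-- Membership in `B_w`: representative of degree `≤ D - 1` which right-divides `w`. -/
def InB {Pf : Type*} [Semiring Pf] (iotf : Fq p m →+* Pf) (Xf : Pf) (w : Pf) (D : ℕ)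
    (c : ℕ →₀ Fq p m) : Prop :=
  (∀ i, D ≤ i → c i = 0) ∧ RDvd (spoly iotf Xf c) w

/-- `deg c < deg d` for coefficient families. -/
def degLt {R : Type*} [Zero R] (c d : ℕ →₀ R) : Prop := c.support.max < d.support.max

/-- "Type (ii)" left ideals of `R^{t,f}_Θ`: those of the form
`Σⱼ R (u^{(t-1)-i_j} b_{i_j}(x) - u^{(t-1)-(i_j-1)} g_{i_j}(x))` with
`0 ≤ i₁ < ⋯ < i_n ≤ t-2`, `b_{i_j} ∈ B_w` of degree `≤ D - 1`, together with the
right-divisibility side condition. -/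
def TypeTwo (p m t : ℕ) [Fact p.Prime] {P Pf Q Qf : Type*} [Ring P] [Ring Pf] [Ring Q] [Ring Qf]
    (iot : Rt p m t →+* P) (Xp : P) (piQ : P →+* Q)
    (iotf : Fq p m →+* Pf) (Xf : Pf) (pif : Pf →+* Qf)
    (w : Pf) (D : ℕ) (J : Ideal Q) : Prop :=
  ∃ (n : ℕ) (idx : Fin n → ℕ) (bcs : Fin n → (ℕ →₀ Fq p m)) (gs : Fin n → Q),
    StrictMono idx ∧ (∀ j, idx j ≤ t - 2) ∧ (∀ j, InB p m iotf Xf w D (bcs j)) ∧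
    J = Submodule.span Q (Set.range fun j : Fin n =>
        uQ p m t iot piQ ^ (t - 1 - idx j) * lQ p m t iot Xp piQ (bcs j)
          - uQ p m t iot piQ ^ (t - idx j) * gs j) ∧
    ∀ (j k : Fin n), j < k → ∀ (cc : ℕ →₀ Fq p m) (g : Q),
      uQ p m t iot piQ ^ (t - 1 - idx j) * lQ p m t iot Xp piQ cc
          + uQ p m t iot piQ ^ (t - idx j) * g ∈
        Submodule.span Q ((fun l : Fin n =>
          uQ p m t iot piQ ^ (t - 1 - idx l) * lQ p m t iot Xp piQ (bcs l)
            - uQ p m t iot piQ ^ (t - idx l) * gs l) '' {l | k ≤ l}) →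
      RDvdC p m iotf Xf pif (bcs j) cc

lemma span_Xt_ne_top (ht : 0 < t) :
    Ideal.span {(X : Polynomial (Fq p m)) ^ t} ≠ ⊤ := by
  rw [Ne, Ideal.span_singleton_eq_top]
  intro h
  have h2 : IsUnit (X : Polynomial (Fq p m)) := by
    have : t = 1 + (t - 1) := by omega
    rw [this, pow_add, pow_one] at h
    exact isUnit_of_mul_isUnit_left h
  exact Polynomial.not_isUnit_X h2

lemma Rt_nontrivial (ht : 0 < t) : Nontrivial (Rt p m t) :=
  Ideal.Quotient.nontrivial_iff.mpr (span_Xt_ne_top p m t ht)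

lemma Th_eps (theta : Fq p m ≃+* Fq p m) (a : Fq p m) :
    Th p m t theta (eps p m t a) = eps p m t (theta a) := by
  simp [Th, eps, Ideal.quotientEquiv_mk, Polynomial.mapEquiv_apply]

lemma Th_uE (theta : Fq p m ≃+* Fq p m) :
    Th p m t theta (uE p m t) = uE p m t := by
  simp [Th, uE, Ideal.quotientEquiv_mk, Polynomial.mapEquiv_apply]

lemma uE_pow_t : uE p m t ^ t = 0 := by
  rw [uE, ← map_pow, Ideal.Quotient.eq_zero_iff_mem]
  exact Ideal.mem_span_singleton_self _

lemma coeff_ext (a b : ℕ → Fq p m)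
    (h : ∑ i ∈ Finset.range t, eps p m t (a i) * uE p m t ^ i
       = ∑ i ∈ Finset.range t, eps p m t (b i) * uE p m t ^ i) :
    ∀ i < t, a i = b i := by
  set d : Polynomial (Fq p m) := ∑ j ∈ Finset.range t, C (a j - b j) * X ^ j with hd
  have hmk : ∀ c : ℕ → Fq p m, ∑ i ∈ Finset.range t, eps p m t (c i) * uE p m t ^ i
      = Ideal.Quotient.mk _ (∑ j ∈ Finset.range t, C (c j) * X ^ j) := by
    intro c
    rw [map_sum]
    refine Finset.sum_congr rfl fun i _ => ?_
    rw [map_mul, map_pow]; rfl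
  rw [hmk, hmk] at h
  have hmem : d ∈ Ideal.span {(X : Polynomial (Fq p m)) ^ t} := by
    rw [← Ideal.Quotient.eq_zero_iff_mem, hd]
    have : ∀ j, (C (a j - b j) * X ^ j : Polynomial (Fq p m))
        = C (a j) * X ^ j - C (b j) * X ^ j := by
      intro j; rw [map_sub, sub_mul]
    simp_rw [this, Finset.sum_sub_distrib, map_sub, h, sub_self]
  have hdvd : (X : Polynomial (Fq p m)) ^ t ∣ d := Ideal.mem_span_singleton.mp hmem
  have hdeg : d.degree < (t : WithBot ℕ) := by
    refine lt_of_le_of_lt (degree_sum_le _ _) ?_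
    rw [Finset.sup_lt_iff (by exact_mod_cast WithBot.bot_lt_coe t)]
    intro j hj
    exact lt_of_le_of_lt (degree_C_mul_X_pow_le j _)
      (by exact_mod_cast Finset.mem_range.mp hj)
  have hd0 : d = 0 := by
    by_contra h0
    have := Polynomial.degree_le_of_dvd hdvd h0
    rw [degree_X_pow] at this
    exact absurd (lt_of_le_of_lt this hdeg) (lt_irrefl _)
  intro i hi
  have := congrArg (fun q => Polynomial.coeff q i) hd0
  simp only [hd, finset_sum_coeff, coeff_C_mul, coeff_X_pow, coeff_zero] at this
  rw [Finset.sum_eq_single i (fun j _ hji => by simp [Ne.symm hji])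
      (fun hni => absurd (Finset.mem_range.mpr hi) hni)] at this
  simp only [if_true, mul_one] at this
  exact sub_eq_zero.mp this

lemma pow_p_mul (hm : 0 < m) (a : Fq p m) (j : ℕ) : a ^ p ^ (m * j) = a := by
  haveI : Fintype (Fq p m) := Fintype.ofFinite _
  have hcard : a ^ p ^ m = a := by
    have h := FiniteField.pow_card a
    rwa [← Nat.card_eq_fintype_card, GaloisField.card p m hm.ne'] at h
  induction j with
  | zero => simp
  | succ n ih => rw [Nat.mul_succ, pow_add, pow_mul, ih, hcard]


/-- If `k ≥ 1` is the smallest index with `λ_k ≠ 0`, then in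
`R^{t,x^{p^s}-λ}_Θ` one has `⟨(λ₀₀ x - 1)^{p^s}⟩ = ⟨u^k⟩`. -/
theorem statement4 (p m t s : ℕ) [Fact p.Prime] (hm : 0 < m) (ht : 0 < t) (hs : 0 < s)
    (theta : Fq p m ≃+* Fq p m)
    (lc : ℕ → Fq p m) (hl0 : lc 0 ≠ 0)
    (hTlam : Th p m t theta (lamOf p m t lc) = lamOf p m t lc)
    (hord : thOrder p m t theta ∣ p ^ s)
    {P : Type*} [Ring P] (iot : Rt p m t →+* P) (Xp : P)
    (hXiot : ∀ r, Xp * iot r = iot (Th p m t theta r) * Xp)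
    (hPrep : ∀ g : P, ∃! c : ℕ →₀ Rt p m t, g = spoly iot Xp c)
    {Q : Type*} [Ring Q] (piQ : P →+* Q) (hpiQ : Function.Surjective piQ)
    (hkerQ : RingHom.ker piQ = Ideal.span {Xp ^ p ^ s - iot (lamOf p m t lc)})
    (k : ℕ) (hk1 : 1 ≤ k) (hkt : k < t) (hk : lc k ≠ 0)
    (hkmin : ∀ j, 1 ≤ j → j < k → lc j = 0) :
    Ideal.span {piQ ((iot (eps p m t ((lc 0 ^ p ^ (m - s % m))⁻¹)) * Xp - 1) ^ p ^ s)} =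
      Ideal.span {uQ p m t iot piQ ^ k} := by

  haveI : Nontrivial (Rt p m t) := Rt_nontrivial p m t ht
  -- `iot` is injective
  have hiotinj : Function.Injective iot := by
    intro r r' hrr
    obtain ⟨cu, hcu, huniq⟩ := hPrep (iot r)
    have sp : ∀ x : Rt p m t, spoly iot Xp (Finsupp.single 0 x) = iot x := fun x => by
      show (Finsupp.single 0 x).sum (fun i a => iot a * Xp ^ i) = iot x
      rw [Finsupp.sum_single_index (by simp)]
      simp
    have e1 : (Finsupp.single 0 r : ℕ →₀ Rt p m t) = cu := huniq _ (sp r).symm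
    have e2 : (Finsupp.single 0 r' : ℕ →₀ Rt p m t) = cu :=
      huniq _ (hrr.trans (sp r').symm)
    have e3 := e1.trans e2.symm
    simpa using congrArg (fun f => f 0) e3
  haveI : CharP (Rt p m t) p := charP_of_injective_ringHom ((eps p m t).injective) p
  haveI : CharP P p := charP_of_injective_ringHom hiotinj p
  -- theta fixes the coefficients of lambda
  have hfix : ∀ i < t, theta (lc i) = lc i := by
    refine coeff_ext p m t _ _ ?_
    calc ∑ i ∈ Finset.range t, eps p m t (theta (lc i)) * uE p m t ^ i
        = Th p m t theta (lamOf p m t lc) := by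
          rw [lamOf, map_sum]
          exact Finset.sum_congr rfl fun i _ => by rw [map_mul, map_pow, Th_eps, Th_uE]
      _ = lamOf p m t lc := hTlam
      _ = ∑ i ∈ Finset.range t, eps p m t (lc i) * uE p m t ^ i := rfl
  set A0 : Fq p m := (lc 0 ^ p ^ (m - s % m))⁻¹ with hA0def
  have hθ0 : theta (lc 0) = lc 0 := hfix 0 ht
  have hθA0 : theta A0 = A0 := by rw [hA0def, map_inv₀, map_pow, hθ0]
  have harith : (m - s % m) + s = m * (s / m + 1) := by
    obtain ⟨a, ha⟩ : ∃ a, m * (s / m) = a := ⟨_, rfl⟩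
    have h1 : m * (s / m) + s % m = s := Nat.div_add_mod s m
    have h2 : s % m < m := Nat.mod_lt s hm
    rw [Nat.mul_add, ha, mul_one]
    omega
  have hA0pow : A0 ^ p ^ s = (lc 0)⁻¹ := by
    rw [hA0def, inv_pow, ← pow_mul, ← pow_add, harith, pow_p_mul p m hm]
  have hcomm : Commute (iot (eps p m t A0)) Xp := by
    have h := hXiot (eps p m t A0)
    rw [Th_eps, hθA0] at h
    exact h.symm
  have key1 : (iot (eps p m t A0) * Xp - 1) ^ p ^ s
      = iot (eps p m t ((lc 0)⁻¹)) * Xp ^ p ^ s - 1 := by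
    rw [sub_pow_char_pow_of_commute p s (Commute.one_right _), one_pow,
        hcomm.mul_pow, ← map_pow, ← map_pow, hA0pow]
  have hXps : piQ (Xp ^ p ^ s) = piQ (iot (lamOf p m t lc)) := by
    have hmem : Xp ^ p ^ s - iot (lamOf p m t lc) ∈ RingHom.ker piQ := by
      rw [hkerQ]; exact Ideal.mem_span_singleton_self _
    rw [RingHom.mem_ker, map_sub, sub_eq_zero] at hmem
    exact hmem
  set c : ℕ → Fq p m := fun i => (lc 0)⁻¹ * lc i with hcdef
  set v : Rt p m t := ∑ j ∈ Finset.range (t - k), eps p m t (c (k + j)) * uE p m t ^ j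
    with hvdef
  have hRt : eps p m t ((lc 0)⁻¹) * lamOf p m t lc - 1 = uE p m t ^ k * v := by
    have h1 : eps p m t ((lc 0)⁻¹) * lamOf p m t lc
        = ∑ i ∈ Finset.range t, eps p m t (c i) * uE p m t ^ i := by
      rw [lamOf, Finset.mul_sum]
      exact Finset.sum_congr rfl fun i _ => by rw [← mul_assoc, ← map_mul]
    have h2 : ∑ i ∈ Finset.range k, eps p m t (c i) * uE p m t ^ i = 1 := by
      have h3 := Finset.sum_range_add_sum_Ico
        (fun i => eps p m t (c i) * uE p m t ^ i) hk1
      rw [Finset.sum_range_one] at h3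
      have h4 : ∑ i ∈ Finset.Ico 1 k, eps p m t (c i) * uE p m t ^ i = 0 :=
        Finset.sum_eq_zero fun i hi => by
          obtain ⟨hi1, hik⟩ := Finset.mem_Ico.mp hi
          simp [hcdef, hkmin i hi1 hik]
      rw [← h3, h4, add_zero, pow_zero, mul_one]
      simp [hcdef, inv_mul_cancel₀ hl0]
    have h5 : ∑ i ∈ Finset.Ico k t, eps p m t (c i) * uE p m t ^ i
        = uE p m t ^ k * v := by
      rw [Finset.sum_Ico_eq_sum_range, hvdef, Finset.mul_sum]
      exact Finset.sum_congr rfl fun j _ => by rw [pow_add]; ring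
    rw [h1, ← Finset.sum_range_add_sum_Ico _ (le_of_lt hkt), h2, h5, add_sub_cancel_left]
  have hvunit : IsUnit v := by
    have h6 := Finset.sum_range_add_sum_Ico
      (fun j => eps p m t (c (k + j)) * uE p m t ^ j) (by omega : 1 ≤ t - k)
    rw [Finset.sum_range_one] at h6
    have hnil : IsNilpotent
        (∑ j ∈ Finset.Ico 1 (t - k), eps p m t (c (k + j)) * uE p m t ^ j) := by
      refine isNilpotent_sum fun j hj => ?_
      obtain ⟨hj1, _⟩ := Finset.mem_Ico.mp hj
      refine ⟨t, ?_⟩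
      have h7 : t ≤ j * t := Nat.le_mul_of_pos_left t hj1
      obtain ⟨d, hd⟩ : ∃ d, j * t = t + d := ⟨j * t - t, by omega⟩
      rw [mul_pow, ← pow_mul, hd, pow_add, uE_pow_t, zero_mul, mul_zero]
    have hck : c k ≠ 0 := mul_ne_zero (inv_ne_zero hl0) hk
    have hunit : IsUnit (eps p m t (c k)) :=
      isUnit_iff_exists_inv.mpr
        ⟨eps p m t (c k)⁻¹, by rw [← map_mul, mul_inv_cancel₀ hck, map_one]⟩
    rw [hvdef, ← h6]
    simp only [pow_zero, mul_one, Nat.add_zero]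
    exact IsNilpotent.isUnit_add_left_of_commute hnil hunit (Commute.all _ _)
  have hcommU : ∀ q : Q, Commute (uQ p m t iot piQ) q := by
    intro q
    obtain ⟨g, rfl⟩ := hpiQ q
    obtain ⟨cg, hcg, -⟩ := hPrep g
    rw [hcg]
    have hP : Commute (iot (uE p m t)) (spoly iot Xp cg) := by
      rw [spoly, Finsupp.sum]
      refine Commute.sum_right _ _ _ fun i _ => ?_
      refine Commute.mul_right ?_ (Commute.pow_right ?_ i)
      · rw [Commute, SemiconjBy, ← map_mul, ← map_mul, mul_comm]
      · have h := hXiot (uE p m t)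
        rw [Th_uE] at h
        exact h.symm
    exact hP.map piQ
  have hElem : piQ ((iot (eps p m t A0) * Xp - 1) ^ p ^ s)
      = uQ p m t iot piQ ^ k * piQ (iot v) := by
    have h8 : uQ p m t iot piQ ^ k * piQ (iot v)
        = piQ (iot (eps p m t ((lc 0)⁻¹) * lamOf p m t lc - 1)) := by
      rw [hRt, map_mul, map_pow, map_mul, map_pow]
      rfl
    rw [key1, h8]
    simp only [map_sub, map_mul, map_one]
    rw [hXps]
  rw [hElem]
  have hW : IsUnit (piQ (iot v)) := hvunit.map (piQ.comp iot)
  obtain ⟨w, hw⟩ := hW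
  have hUc : ∀ q : Q, uQ p m t iot piQ ^ k * q = q * uQ p m t iot piQ ^ k :=
    fun q => ((hcommU q).pow_left k).eq
  apply le_antisymm
  · rw [Ideal.span_le]
    rintro x hx
    rw [Set.mem_singleton_iff] at hx
    subst hx
    exact Submodule.mem_span_singleton.mpr
      ⟨piQ (iot v), by rw [smul_eq_mul, ← hUc]⟩
  · rw [Ideal.span_le]
    rintro x hx
    rw [Set.mem_singleton_iff] at hx
    subst hx
    refine Submodule.mem_span_singleton.mpr ⟨(↑w⁻¹ : Q), ?_⟩
    rw [smul_eq_mul, ← hw, hUc, ← mul_assoc, Units.inv_mul, one_mul]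


end SkewPaper
end

section
/- Suppose λ is a square in R^t, say λ = λ̃² with λ̃ ∈ R^t (so that Θ(λ̃) = λ̃ since Θ(λ) = λ). Then x^{2p^s} − λ = (x^{p^s} − λ̃)(x^{p^s} + λ̃) in R^t[x,Θ], and there is a ring isomorphism R^{t,x^{2p^s}−λ}_Θ ≅ R^t[x,Θ]/⟨x^{p^s}−λ̃⟩ ⊕ R^t[x,Θ]/⟨x^{p^s}+λ̃⟩. -/
open Polynomial

namespace SkewPaper

variable (p m t : ℕ) [Fact p.Prime]

section AuxLemmas

variable {p m t : ℕ} [Fact p.Prime]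

lemma rdc_eps (ht : 0 < t) (a : Fq p m) : rdc p m t ht (eps p m t a) = a := by
  simp [rdc, eps]

lemma rdc_uE (ht : 0 < t) : rdc p m t ht (uE p m t) = 0 := by
  simp [rdc, uE]

lemma uE_pow (ht : 0 < t) : uE p m t ^ t = 0 := by
  rw [uE, ← map_pow, Ideal.Quotient.eq_zero_iff_mem]
  exact Ideal.subset_span rfl

lemma exists_of_rdc_eq_zero (ht : 0 < t) (a : Rt p m t) (h : rdc p m t ht a = 0) :
    ∃ b, a = uE p m t * b := by
  obtain ⟨f, rfl⟩ := Ideal.Quotient.mk_surjective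
    (I := Ideal.span {(Polynomial.X : Polynomial (Fq p m)) ^ t}) a
  have h0 : f.eval 0 = 0 := by simpa [rdc] using h
  have h1 : Polynomial.X ∣ f := Polynomial.X_dvd_iff.mpr (by
    rw [Polynomial.coeff_zero_eq_eval_zero]; exact h0)
  obtain ⟨g, rfl⟩ := h1
  exact ⟨Ideal.Quotient.mk _ g, by rw [uE, ← map_mul]⟩

lemma isUnit_of_rdc_ne_zero (ht : 0 < t) (a : Rt p m t) (h : rdc p m t ht a ≠ 0) :
    IsUnit a := by
  obtain ⟨b, hb⟩ := exists_of_rdc_eq_zero ht (a - eps p m t (rdc p m t ht a)) (by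
    rw [map_sub, rdc_eps, sub_self])
  have ha : a = eps p m t (rdc p m t ht a) + uE p m t * b := by
    rw [← hb]; ring
  rw [ha]
  refine IsNilpotent.isUnit_add_left_of_commute ⟨t, ?_⟩ ((h.isUnit).map (eps p m t))
    (Commute.all _ _)
  rw [mul_pow, uE_pow ht, zero_mul]

lemma rdc_lamOf (ht : 0 < t) (lc : ℕ → Fq p m) :
    rdc p m t ht (lamOf p m t lc) = lc 0 := by
  rw [lamOf, map_sum]
  rw [Finset.sum_eq_single 0]
  · simp [rdc_eps]
  · intro i _ hi
    simp [rdc_eps, rdc_uE, zero_pow hi]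
  · intro h0
    exact absurd (Finset.mem_range.mpr ht) h0

lemma two_ne_zero_fq (hp2 : p ≠ 2) : (2 : Fq p m) ≠ 0 := by
  intro h
  have hdvd : (p : ℕ) ∣ 2 := by
    have h2 : ((2 : ℕ) : Fq p m) = 0 := by exact_mod_cast h
    exact (CharP.cast_eq_zero_iff (Fq p m) p 2).mp h2
  exact hp2 ((Nat.prime_dvd_prime_iff_eq (Fact.out) Nat.prime_two).mp hdvd)

section SP
variable {R A : Type*} [Semiring R] [Ring A] (iot : R →+* A) (X : A)

lemma spoly_single (i : ℕ) (a : R) :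
    spoly iot X (Finsupp.single i a) = iot a * X ^ i := by
  rw [spoly, Finsupp.sum_single_index]; simp

lemma spoly_zero : spoly iot X (0 : ℕ →₀ R) = 0 := Finsupp.sum_zero_index

/-- spoly as an additive hom. -/
noncomputable def spolyHom : (ℕ →₀ R) →+ A :=
  Finsupp.liftAddHom fun i => (AddMonoidHom.mulRight (X ^ i)).comp iot.toAddMonoidHom

lemma spolyHom_apply (c : ℕ →₀ R) : spolyHom iot X c = spoly iot X c := rfl

lemma spoly_mul_X_pow (c : ℕ →₀ R) (N : ℕ) :
    spoly iot X c * X ^ N = spoly iot X (Finsupp.mapDomain (· + N) c) := by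
  rw [spoly, spoly, Finsupp.sum_mapDomain_index (by simp) (by intros; rw [map_add, add_mul]),
    Finsupp.sum_mul]
  exact Finsupp.sum_congr fun i _ => by rw [pow_add, mul_assoc]

lemma spoly_mul_iot (Tf : R → R) (hXiot : ∀ r, X * iot r = iot (Tf r) * X)
    (c : ℕ →₀ R) (r : R) :
    spoly iot X c * iot r
      = spoly iot X (c.sum fun i a => Finsupp.single i (a * Tf^[i] r)) := by
  have L0 : ∀ (i : ℕ) (r : R), X ^ i * iot r = iot (Tf^[i] r) * X ^ i := by
    intro i
    induction i with
    | zero => simp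
    | succ n ih =>
      intro r
      rw [pow_succ, mul_assoc, hXiot, ← mul_assoc, ih, Function.iterate_succ_apply,
        mul_assoc]
  conv_rhs => rw [← spolyHom_apply, map_finsuppSum]
  rw [spoly, Finsupp.sum_mul]
  refine Finsupp.sum_congr fun i _ => ?_
  rw [spolyHom_apply, spoly_single, map_mul, mul_assoc, L0, ← mul_assoc]

end SP

end AuxLemmas

set_option maxHeartbeats 2000000 in
/-- If `λ` is a square, say `λ = λ̃²`, then `Θ(λ̃) = λ̃`,
`x^{2p^s} - λ = (x^{p^s} - λ̃)(x^{p^s} + λ̃)` and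
`R^{t,x^{2p^s}-λ}_Θ ≅ R^t[x,Θ]/⟨x^{p^s}-λ̃⟩ ⊕ R^t[x,Θ]/⟨x^{p^s}+λ̃⟩`. -/
theorem statement9 (p m t s : ℕ) [Fact p.Prime] (hp2 : p ≠ 2) (hm : 0 < m) (ht : 0 < t)
    (hs : 0 < s) (theta : Fq p m ≃+* Fq p m)
    (lc : ℕ → Fq p m) (hl0 : lc 0 ≠ 0)
    (hTlam : Th p m t theta (lamOf p m t lc) = lamOf p m t lc)
    (hord : thOrder p m t theta ∣ 2 * p ^ s)
    {P : Type*} [Ring P] (iot : Rt p m t →+* P) (Xp : P)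
    (hXiot : ∀ r, Xp * iot r = iot (Th p m t theta r) * Xp)
    (hPrep : ∀ g : P, ∃! c : ℕ →₀ Rt p m t, g = spoly iot Xp c)
    (lamt : Rt p m t) (hsq : lamOf p m t lc = lamt ^ 2)
    {Q : Type*} [Ring Q] (piQ : P →+* Q) (hpiQ : Function.Surjective piQ)
    (hkerQ : RingHom.ker piQ = Ideal.span {Xp ^ (2 * p ^ s) - iot (lamOf p m t lc)})
    {Q1 : Type*} [Ring Q1] (pi1 : P →+* Q1) (hpi1 : Function.Surjective pi1)
    (hker1 : RingHom.ker pi1 = Ideal.span {Xp ^ p ^ s - iot lamt})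
    {Q2 : Type*} [Ring Q2] (pi2 : P →+* Q2) (hpi2 : Function.Surjective pi2)
    (hker2 : RingHom.ker pi2 = Ideal.span {Xp ^ p ^ s + iot lamt}) :
    Th p m t theta lamt = lamt ∧
    Xp ^ (2 * p ^ s) - iot (lamOf p m t lc) = (Xp ^ p ^ s - iot lamt) * (Xp ^ p ^ s + iot lamt) ∧
    Nonempty (Q ≃+* Q1 × Q2) := by
  classical
  set N := p ^ s with hN
  have hNpos : 0 < N := pow_pos (Nat.Prime.pos Fact.out) s
  set z1 : P := Xp ^ N - iot lamt with hz1
  set z2 : P := Xp ^ N + iot lamt with hz2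
  -- units in Rt
  have hUlam : IsUnit (lamOf p m t lc) :=
    isUnit_of_rdc_ne_zero ht _ (by rw [rdc_lamOf ht]; exact hl0)
  have hlam2 : lamt * lamt = lamOf p m t lc := by rw [hsq, sq]
  have hUl : IsUnit lamt := by
    rw [← hlam2] at hUlam
    exact isUnit_of_mul_isUnit_left hUlam
  have hrl : rdc p m t ht lamt ≠ 0 := (hUl.map (rdc p m t ht)).ne_zero
  have h2F : (2 : Fq p m) ≠ 0 := two_ne_zero_fq hp2
  have hsum_ne : rdc p m t ht lamt + rdc p m t ht lamt ≠ 0 := by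
    intro hzz
    have h22 : (2 : Fq p m) * rdc p m t ht lamt = 0 := by rw [two_mul]; exact hzz
    rcases mul_eq_zero.mp h22 with h' | h'
    exacts [h2F h', hrl h']
  -- coefficient uniqueness
  have huniq : ∀ c c' : ℕ →₀ Rt p m t, spoly iot Xp c = spoly iot Xp c' → c = c' := by
    intro c c' hcc
    obtain ⟨c0, -, hu⟩ := hPrep (spoly iot Xp c')
    rw [hu c hcc.symm, hu c' rfl]
  have hiotinj : ∀ d : Rt p m t, iot d = 0 → d = 0 := by
    intro d hd
    have h0 : Finsupp.single 0 d = (0 : ℕ →₀ Rt p m t) := by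
      apply huniq
      rw [spoly_single, spoly_zero, pow_zero, mul_one, hd]
    rwa [Finsupp.single_eq_zero] at h0
  -- skew commutation of powers of X
  have L0 : ∀ (i : ℕ) (r : Rt p m t),
      Xp ^ i * iot r = iot ((⇑(Th p m t theta))^[i] r) * Xp ^ i := by
    intro i
    induction i with
    | zero => simp
    | succ n ih =>
      intro r
      rw [pow_succ, mul_assoc, hXiot, ← mul_assoc, ih, Function.iterate_succ_apply,
        mul_assoc]
  -- iterates are multiplicative/additive
  have hit_mul : ∀ (k : ℕ) (a b : Rt p m t),
      (⇑(Th p m t theta))^[k] (a * b)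
        = (⇑(Th p m t theta))^[k] a * (⇑(Th p m t theta))^[k] b := by
    intro k
    induction k with
    | zero => intro a b; rfl
    | succ n ih =>
      intro a b
      rw [Function.iterate_succ_apply', Function.iterate_succ_apply',
        Function.iterate_succ_apply', ih, map_mul]
  have hit_add : ∀ (k : ℕ) (a b : Rt p m t),
      (⇑(Th p m t theta))^[k] (a + b)
        = (⇑(Th p m t theta))^[k] a + (⇑(Th p m t theta))^[k] b := by
    intro k
    induction k with
    | zero => intro a b; rfl
    | succ n ih =>
      intro a b
      rw [Function.iterate_succ_apply', Function.iterate_succ_apply',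
        Function.iterate_succ_apply', ih, map_add]
  -- the core lemma: a left multiple of z1 which is a constant is zero
  have CL : ∀ (h : P) (d : Rt p m t), h * z1 = iot d → d = 0 := by
    intro h d hEq
    obtain ⟨c, hc, -⟩ := hPrep h
    subst hc
    set e : ℕ →₀ Rt p m t :=
      Finsupp.mapDomain (· + N) c
        - c.sum (fun i a => Finsupp.single i (a * (⇑(Th p m t theta))^[i] lamt)) with he
    have hse : spoly iot Xp e = iot d := by
      rw [he, ← spolyHom_apply, map_sub, spolyHom_apply, spolyHom_apply,
        ← spoly_mul_X_pow, ← spoly_mul_iot iot Xp (⇑(Th p m t theta)) hXiot, ← mul_sub]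
      exact hEq
    have hed : e = Finsupp.single 0 d := by
      apply huniq
      rw [hse, spoly_single, pow_zero, mul_one]
    by_cases hc0 : c = 0
    · subst hc0
      apply hiotinj
      rw [← hEq, spoly_zero, zero_mul]
    · exfalso
      have hne : c.support.Nonempty := Finsupp.support_nonempty_iff.mpr hc0
      have hcM : c (c.support.max' hne) ≠ 0 :=
        Finsupp.mem_support_iff.mp (c.support.max'_mem hne)
      have h2 : (c.sum fun i a => Finsupp.single i (a * (⇑(Th p m t theta))^[i] lamt))
          (c.support.max' hne + N) = 0 := by
        rw [Finsupp.sum_apply, Finsupp.sum]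
        apply Finset.sum_eq_zero
        intro i hi
        have hle : i ≤ c.support.max' hne := Finset.le_max' _ i hi
        exact Finsupp.single_eq_of_ne (by omega)
      have h1 : e (c.support.max' hne + N) = c (c.support.max' hne) := by
        rw [he, Finsupp.sub_apply, Finsupp.mapDomain_apply (add_left_injective N) c, h2,
          sub_zero]
      have h3 : e (c.support.max' hne + N) = 0 := by
        rw [hed]
        exact Finsupp.single_eq_of_ne (by omega)
      exact hcM (by rw [← h1, h3])
  -- z1 and z2 are killed by pi1, pi2
  have hz1mem : pi1 z1 = 0 := by
    have : z1 ∈ RingHom.ker pi1 := by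
      rw [hker1]; exact Ideal.subset_span rfl
    exact RingHom.mem_ker.mp this
  have hz2mem : pi2 z2 = 0 := by
    have : z2 ∈ RingHom.ker pi2 := by
      rw [hker2]; exact Ideal.subset_span rfl
    exact RingHom.mem_ker.mp this
  -- Θ^[N] fixes lamt
  have hTN : (⇑(Th p m t theta))^[N] lamt = lamt := by
    have hiotd : z1 * iot lamt - iot ((⇑(Th p m t theta))^[N] lamt) * z1
        = iot ((⇑(Th p m t theta))^[N] lamt * lamt - lamt * lamt) := by
      rw [hz1, map_sub, map_mul, map_mul, sub_mul, mul_sub, L0]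
      abel
    have hd0mem : iot ((⇑(Th p m t theta))^[N] lamt * lamt - lamt * lamt)
        ∈ RingHom.ker pi1 := by
      rw [RingHom.mem_ker, ← hiotd, map_sub, map_mul, map_mul, hz1mem, mul_zero, zero_mul,
        sub_zero]
    rw [hker1] at hd0mem
    obtain ⟨h, hh⟩ := Submodule.mem_span_singleton.mp hd0mem
    have hd00 := CL h _ (by rw [← hh, smul_eq_mul])
    rw [sub_eq_zero] at hd00
    exact hUl.mul_right_cancel hd00
  -- first conclusion: Θ fixes lamt
  have hfix1 : Th p m t theta lamt = lamt := by
    have hAsq : Th p m t theta lamt * Th p m t theta lamt = lamt * lamt := by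
      rw [← map_mul (Th p m t theta) lamt lamt, hlam2, hTlam, ← hlam2]
    have hfact : (Th p m t theta lamt - lamt) * (Th p m t theta lamt + lamt) = 0 := by
      have : (Th p m t theta lamt - lamt) * (Th p m t theta lamt + lamt)
          = Th p m t theta lamt * Th p m t theta lamt - lamt * lamt := by ring
      rw [this, hAsq, sub_self]
    have hcase : rdc p m t ht (Th p m t theta lamt) = rdc p m t ht lamt
        ∨ rdc p m t ht (Th p m t theta lamt) = -(rdc p m t ht lamt) := by
      have h0 : (rdc p m t ht (Th p m t theta lamt) - rdc p m t ht lamt)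
          * (rdc p m t ht (Th p m t theta lamt) + rdc p m t ht lamt) = 0 := by
        have := congrArg (rdc p m t ht) hfact
        rw [map_mul, map_sub, map_add, map_zero] at this
        exact this
      rcases mul_eq_zero.mp h0 with h | h
      · exact Or.inl (sub_eq_zero.mp h)
      · exact Or.inr (eq_neg_of_add_eq_zero_left h)
    rcases hcase with hcs | hcs
    · have hu : IsUnit (Th p m t theta lamt + lamt) := by
        apply isUnit_of_rdc_ne_zero ht
        rw [map_add, hcs]
        exact hsum_ne
      have h0 := (IsUnit.mul_left_eq_zero hu).mp hfact
      rwa [sub_eq_zero] at h0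
    · exfalso
      have hu : IsUnit (Th p m t theta lamt - lamt) := by
        apply isUnit_of_rdc_ne_zero ht
        rw [map_sub, hcs]
        intro hzz
        apply hsum_ne
        linear_combination -hzz
      have hAneg : Th p m t theta lamt = -lamt := by
        have h0 := (IsUnit.mul_right_eq_zero hu).mp hfact
        exact eq_neg_of_add_eq_zero_left h0
      have hodd : Odd N := by
        rw [hN]
        exact (Nat.Prime.odd_of_ne_two Fact.out hp2).pow
      obtain ⟨q, hq⟩ := hodd
      have hiter : ∀ k : ℕ, (⇑(Th p m t theta))^[2 * k + 1] lamt = -lamt := by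
        intro k
        induction k with
        | zero => simpa using hAneg
        | succ n ih =>
          have h2eq : 2 * (n + 1) + 1 = 2 + (2 * n + 1) := by ring
          rw [h2eq, Function.iterate_add_apply, ih]
          have : (⇑(Th p m t theta))^[2] (-lamt) = Th p m t theta (Th p m t theta (-lamt)) := by
            rw [show (2 : ℕ) = 1 + 1 from rfl, Function.iterate_add_apply]
            simp only [Function.iterate_one]
          rw [this, map_neg, hAneg, neg_neg, hAneg]
      have hcontr : -lamt = lamt := by
        rw [← hiter q, ← hq, hTN]
      apply hsum_ne
      have : lamt + lamt = 0 := by linear_combination -hcontr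
      have := congrArg (rdc p m t ht) this
      rwa [map_add, map_zero] at this
  -- second conclusion: factorization
  have hXcomm : Xp ^ N * iot lamt = iot lamt * Xp ^ N := by rw [L0, hTN]
  have hfact2 : Xp ^ (2 * N) - iot (lamOf p m t lc) = z1 * z2 := by
    have e1 : z1 * z2 = Xp ^ N * Xp ^ N - iot lamt * iot lamt := by
      rw [hz1, hz2, sub_mul, mul_add, mul_add, hXcomm]
      abel
    rw [e1, two_mul, pow_add, ← map_mul, hlam2]
  have hz12 : z1 * z2 = z2 * z1 := by
    have e1 : z1 * z2 = Xp ^ N * Xp ^ N - iot lamt * iot lamt := by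
      rw [hz1, hz2, sub_mul, mul_add, mul_add, hXcomm]
      abel
    have e2 : z2 * z1 = Xp ^ N * Xp ^ N - iot lamt * iot lamt := by
      rw [hz1, hz2, add_mul, mul_sub, mul_sub, hXcomm]
      abel
    rw [e1, e2]
  -- commutation with constants fixed by Θ^[N]
  have hfixTN : ∀ r : Rt p m t, (⇑(Th p m t theta))^[N] r = r →
      z1 * iot r = iot r * z1 ∧ z2 * iot r = iot r * z2 := by
    intro r hr
    constructor
    · rw [hz1, sub_mul, mul_sub, L0, hr, ← map_mul, ← map_mul, mul_comm r lamt]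
    · rw [hz2, add_mul, mul_add, L0, hr, ← map_mul, ← map_mul, mul_comm r lamt]
  -- the unit w = lamt + lamt and its inverse
  have hUw : IsUnit (lamt + lamt) := by
    apply isUnit_of_rdc_ne_zero ht
    rw [map_add]
    exact hsum_ne
  obtain ⟨wu, hwu⟩ := hUw
  have hvw : ((wu⁻¹ : (Rt p m t)ˣ) : Rt p m t) * (lamt + lamt) = 1 := by
    rw [← hwu]; exact wu.inv_mul
  have hfixw : (⇑(Th p m t theta))^[N] (lamt + lamt) = lamt + lamt := by
    rw [hit_add, hTN]
  have hfixv : (⇑(Th p m t theta))^[N] ((wu⁻¹ : (Rt p m t)ˣ) : Rt p m t)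
      = ((wu⁻¹ : (Rt p m t)ˣ) : Rt p m t) := by
    have hUw' : IsUnit (lamt + lamt) := ⟨wu, hwu⟩
    refine hUw'.mul_right_cancel ?_
    rw [hvw, ← hfixw, ← hit_mul, hvw]
    exact (Function.iterate_fixed (map_one (Th p m t theta)) N)
  set bb : P := iot ((wu⁻¹ : (Rt p m t)ˣ) : Rt p m t) with hbb
  have hzc1 : z1 * bb = bb * z1 := (hfixTN _ hfixv).1
  have hzc2 : z2 * bb = bb * z2 := (hfixTN _ hfixv).2
  have hz2z1 : z2 - z1 = iot (lamt + lamt) := by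
    rw [hz1, hz2, map_add]
    abel
  have hab : bb * z2 - bb * z1 = 1 := by
    rw [← mul_sub, hz2z1, hbb, ← map_mul, hvw, map_one]
  have hbz1_1 : pi1 (bb * z1) = 0 := by rw [map_mul, hz1mem, mul_zero]
  have hbz2_2 : pi2 (bb * z2) = 0 := by rw [map_mul, hz2mem, mul_zero]
  have hbz2_1 : pi1 (bb * z2) = 1 := by
    have hsplit : bb * z2 = 1 + bb * z1 := by rw [← hab]; abel
    rw [hsplit, map_add, map_one, hbz1_1, add_zero]
  have hbz1_2 : pi2 (bb * z1) = -1 := by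
    have h0 : pi2 (bb * z2 - bb * z1) = 1 := by rw [hab, map_one]
    rw [map_sub, hbz2_2, zero_sub] at h0
    rw [← neg_neg (pi2 (bb * z1)), h0]
  -- the product map and the isomorphism
  set phi : P →+* Q1 × Q2 := pi1.prod pi2 with hphi
  have hphiap : ∀ x : P, phi x = (pi1 x, pi2 x) := fun x => rfl
  have hker_le : RingHom.ker piQ ≤ RingHom.ker phi := by
    rw [hkerQ, Ideal.span_le]
    intro x hx
    rw [Set.mem_singleton_iff] at hx
    subst hx
    rw [SetLike.mem_coe, RingHom.mem_ker, hfact2, hphiap]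
    have hp1z : pi1 (z1 * z2) = 0 := by rw [map_mul, hz1mem, zero_mul]
    have hp2z : pi2 (z1 * z2) = 0 := by rw [hz12, map_mul, hz2mem, zero_mul]
    rw [hp1z, hp2z]
    rfl
  set f : Q →+* Q1 × Q2 :=
    piQ.liftOfRightInverse (Function.surjInv hpiQ) (Function.rightInverse_surjInv hpiQ)
      ⟨phi, hker_le⟩ with hf
  have hfpiQ : ∀ x : P, f (piQ x) = phi x := fun x =>
    RingHom.liftOfRightInverse_comp_apply piQ (Function.surjInv hpiQ)
      (Function.rightInverse_surjInv hpiQ) ⟨phi, hker_le⟩ x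
  have hsurj : Function.Surjective f := by
    rintro ⟨q1, q2⟩
    obtain ⟨a1, ha1⟩ := hpi1 q1
    obtain ⟨a2, ha2⟩ := hpi2 q2
    refine ⟨piQ (a1 * (bb * z2) - a2 * (bb * z1)), ?_⟩
    rw [hfpiQ, hphiap]
    refine Prod.ext ?_ ?_
    · show pi1 (a1 * (bb * z2) - a2 * (bb * z1)) = q1
      rw [map_sub, map_mul pi1 a1 (bb * z2), map_mul pi1 a2 (bb * z1), hbz2_1, hbz1_1,
        mul_one, mul_zero, sub_zero, ha1]
    · show pi2 (a1 * (bb * z2) - a2 * (bb * z1)) = q2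
      rw [map_sub, map_mul pi2 a1 (bb * z2), map_mul pi2 a2 (bb * z1), hbz2_2, hbz1_2,
        mul_zero, mul_neg_one, zero_sub, neg_neg, ha2]
  have hker0 : ∀ x : P, phi x = 0 → piQ x = 0 := by
    intro x hx
    rw [hphiap] at hx
    have hx1 : pi1 x = 0 := congrArg Prod.fst hx
    have hx2 : pi2 x = 0 := congrArg Prod.snd hx
    obtain ⟨h1, hh1⟩ := Submodule.mem_span_singleton.mp (hker1 ▸ RingHom.mem_ker.mpr hx1)
    obtain ⟨h2, hh2⟩ := Submodule.mem_span_singleton.mp (hker2 ▸ RingHom.mem_ker.mpr hx2)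
    rw [smul_eq_mul] at hh1 hh2
    have e1 : x * (bb * z2) = h1 * bb * (z1 * z2) := by
      rw [← hh1, mul_assoc, ← mul_assoc z1 bb z2, hzc1, mul_assoc bb z1 z2, ← mul_assoc]
    have e2 : x * (bb * z1) = h2 * bb * (z1 * z2) := by
      rw [← hh2, mul_assoc, ← mul_assoc z2 bb z1, hzc2, mul_assoc bb z2 z1, ← hz12,
        ← mul_assoc]
    have hxeq : x = (h1 * bb - h2 * bb) * (z1 * z2) := by
      calc x = x * (bb * z2 - bb * z1) := by rw [hab, mul_one]
        _ = x * (bb * z2) - x * (bb * z1) := by rw [mul_sub]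
        _ = h1 * bb * (z1 * z2) - h2 * bb * (z1 * z2) := by rw [e1, e2]
        _ = (h1 * bb - h2 * bb) * (z1 * z2) := (sub_mul (h1 * bb) (h2 * bb) (z1 * z2)).symm
    rw [← RingHom.mem_ker, hkerQ, hfact2, hxeq]
    exact Ideal.mul_mem_left _ _ (Ideal.subset_span rfl)
  have hinj : Function.Injective f := by
    intro q q' hqq
    obtain ⟨x, rfl⟩ := hpiQ q
    obtain ⟨x', rfl⟩ := hpiQ q'
    rw [hfpiQ, hfpiQ] at hqq
    have h0 : phi (x - x') = 0 := by rw [map_sub, hqq, sub_self]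
    have h1 := hker0 _ h0
    rw [map_sub, sub_eq_zero] at h1
    exact h1
  exact ⟨hfix1, hfact2, ⟨RingEquiv.ofBijective f ⟨hinj, hsurj⟩⟩⟩

end SkewPaper
end
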